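/- arXiv:1211.3144 — 2 statements merged into one kernel-verified Lean document; each statement's English description precedes it below -/
import Mathlib

section
/- In BS(1,m) = ⟨a,b | bab⁻¹ = aᵐ⟩ with m ≥ 2, for every nonzero integer r the word length of aʳ satisfies (1/2)·log_m|r| ≤ |aʳ| ≤ (m+2)·log_m|r| + m/2 + 1. -/
/-- The relator of the solvable Baumslag–Solitar group `BS(1,m)`:
`b a b⁻¹ a⁻ᵐ`, in the free group on two generators (`0 ↦ a`, `1 ↦ b`). -/
def BSrel (m : ℕ) : Set (FreeGroup (Fin 2)) :=
  {FreeGroup.of 1 * FreeGroup.of 0 * (FreeGroup.of 1)⁻¹ * (FreeGroup.of 0 ^ m)⁻¹}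

/-- The Baumslag–Solitar group `BS(1,m) = ⟨a, b ∣ b a b⁻¹ = aᵐ⟩`. -/
abbrev BS (m : ℕ) := PresentedGroup (BSrel m)

/-- The generator `a` of `BS(1,m)`. -/
def aBS (m : ℕ) : BS m := PresentedGroup.of 0

/-- The generator `b` of `BS(1,m)`. -/
def bBS (m : ℕ) : BS m := PresentedGroup.of 1

/-- The generating set `{a, b}` of `BS(1,m)`. -/
def genBS (m : ℕ) : Set (BS m) := {aBS m, bBS m}

/-- Word length of `g` with respect to a generating set `S`. -/
noncomputable def wordLength {G : Type*} [Group G] (S : Set G) (g : G) : ℕ :=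
  sInf {n | ∃ l : List G, (∀ x ∈ l, x ∈ S ∨ x⁻¹ ∈ S) ∧ l.prod = g ∧ l.length = n}

/-!
The homomorphism `a ↦ (x ↦ x + 1)`, `b ↦ (x ↦ m x)` lets `BS(1,m)` act on `ℝ`. Every generator
and every inverse of a generator multiplies `|x| + 1` by at most `m`, and `aʳ` moves `0` to `r`;
hence `|r| + 1 ≤ m ^ |aʳ|`, which gives the lower bound with room to spare.

For the upper bound, `aⁿ = aᶜ (b a^q b⁻¹)` when `n = m q + c`, so peeling off the base-`m` digits
of `n` writes `aⁿ` as a word of length at most `(m + 1) J + d`, where `J = ⌊log_m n⌋` and `d` is the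
leading digit. Since `log_m n ≥ J + log_m d`, it remains to see `d ≤ (m + 2) log_m d + m/2 + 1` for
`1 ≤ d < m`; when `d > m/2 + 1` this holds because `d² ≥ m`, i.e. `log_m d ≥ 1/2`.
-/

section WordLength

variable {G : Type*} [Group G] {S : Set G}

def IsWord (S : Set G) (l : List G) : Prop :=
  ∀ x ∈ l, x ∈ S ∨ x⁻¹ ∈ S

theorem IsWord.append {l₁ l₂ : List G} (h₁ : IsWord S l₁) (h₂ : IsWord S l₂) :
    IsWord S (l₁ ++ l₂) :=
  List.forall_mem_append.mpr ⟨h₁, h₂⟩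

theorem wordLength_prod_le_length {l : List G} (hl : IsWord S l) :
    wordLength S l.prod ≤ l.length :=
  Nat.sInf_le ⟨l, hl, rfl, rfl⟩

theorem exists_isWord_prod_eq (hS : Subgroup.closure S = ⊤) (g : G) :
    ∃ l, IsWord S l ∧ l.prod = g := by
  have hg : g ∈ (Subgroup.closure S).toSubmonoid := by simp [hS]
  rw [Subgroup.closure_toSubmonoid] at hg
  exact Submonoid.exists_list_of_mem_closure hg

theorem exists_isWord_length_eq_wordLength (hS : Subgroup.closure S = ⊤) (g : G) :
    ∃ l, IsWord S l ∧ l.prod = g ∧ l.length = wordLength S g := by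
  obtain ⟨l, hl, rfl⟩ := exists_isWord_prod_eq hS g
  exact Nat.sInf_mem (s := {n | ∃ l' : List G, IsWord S l' ∧ l'.prod = l.prod ∧ l'.length = n})
    ⟨_, l, hl, rfl, rfl⟩

theorem wordLength_le_one_of_mem {s : G} (hs : s ∈ S) : wordLength S s ≤ 1 := by
  simpa using wordLength_prod_le_length (S := S) (l := [s]) (by simp [IsWord, hs])

theorem wordLength_inv_le_one_of_mem {s : G} (hs : s ∈ S) : wordLength S s⁻¹ ≤ 1 := by
  simpa using wordLength_prod_le_length (S := S) (l := [s⁻¹]) (by simp [IsWord, hs])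

theorem wordLength_mul_le (hS : Subgroup.closure S = ⊤) (g h : G) :
    wordLength S (g * h) ≤ wordLength S g + wordLength S h := by
  obtain ⟨l₁, hl₁, rfl, h₁⟩ := exists_isWord_length_eq_wordLength hS g
  obtain ⟨l₂, hl₂, rfl, h₂⟩ := exists_isWord_length_eq_wordLength hS h
  rw [← h₁, ← h₂, ← List.length_append, ← List.prod_append]
  exact wordLength_prod_le_length (hl₁.append hl₂)

theorem wordLength_conj_le (hS : Subgroup.closure S = ⊤) {s : G} (hs : s ∈ S) (g : G) :
    wordLength S (s * g * s⁻¹) ≤ wordLength S g + 2 := by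
  have := wordLength_mul_le hS (s * g) s⁻¹
  have := wordLength_mul_le hS s g
  have := wordLength_le_one_of_mem hs
  have := wordLength_inv_le_one_of_mem hs
  omega

theorem wordLength_pow_le (hS : Subgroup.closure S = ⊤) (g : G) (n : ℕ) :
    wordLength S (g ^ n) ≤ n * wordLength S g := by
  induction n with
  | zero => simpa using wordLength_prod_le_length (S := S) (l := []) (by simp [IsWord])
  | succ n ih =>
    rw [pow_succ, add_one_mul]
    exact (wordLength_mul_le hS _ _).trans (by omega)

theorem wordLength_inv_le (hS : Subgroup.closure S = ⊤) (g : G) :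
    wordLength S g⁻¹ ≤ wordLength S g := by
  obtain ⟨l, hl, rfl, hlen⟩ := exists_isWord_length_eq_wordLength hS g
  rw [← hlen, List.prod_inv_reverse]
  refine (wordLength_prod_le_length fun x hx => ?_).trans (by simp)
  obtain ⟨y, hy, rfl⟩ := List.mem_map.mp (List.mem_reverse.mp hx)
  simpa [or_comm] using hl y hy

end WordLength

section Action

variable {G α : Type*} [Group G] [MulAction G α] {S : Set G} {N : α → ℝ} {c : ℝ}

theorem apply_prod_smul_le_pow_length_mul (hc : 0 ≤ c)
    (hN : ∀ s ∈ S, ∀ x, N (s • x) ≤ c * N x ∧ N (s⁻¹ • x) ≤ c * N x)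
    {l : List G} (hl : IsWord S l) (x : α) : N (l.prod • x) ≤ c ^ l.length * N x := by
  induction l with
  | nil => simp
  | cons g t ih =>
    have hg : N (g • t.prod • x) ≤ c * N (t.prod • x) := by
      rcases hl g List.mem_cons_self with hg | hg
      · exact (hN g hg _).1
      · simpa using (hN g⁻¹ hg _).2
    rw [List.prod_cons, mul_smul, List.length_cons, pow_succ', mul_assoc]
    exact hg.trans (mul_le_mul_of_nonneg_left (ih fun y hy => hl y (List.mem_cons_of_mem g hy)) hc)

theorem apply_smul_le_pow_wordLength_mul (hS : Subgroup.closure S = ⊤) (hc : 0 ≤ c)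
    (hN : ∀ s ∈ S, ∀ x, N (s • x) ≤ c * N x ∧ N (s⁻¹ • x) ≤ c * N x) (g : G) (x : α) :
    N (g • x) ≤ c ^ wordLength S g * N x := by
  obtain ⟨l, hl, rfl, hlen⟩ := exists_isWord_length_eq_wordLength hS g
  rw [← hlen]
  exact apply_prod_smul_le_pow_length_mul hc hN hl x

end Action

theorem Real.logb_le_of_le_pow {b x : ℝ} (hb : 1 < b) (hx : 0 ≤ x) {k : ℕ} (h : x ≤ b ^ k) :
    Real.logb b x ≤ k := by
  rcases hx.eq_or_lt with rfl | hx
  · simp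
  · rw [Real.logb_le_iff_le_rpow hb hx, Real.rpow_natCast]
    exact h

theorem natCast_le_mul_logb_of_lt {m d : ℕ} (hm : 2 ≤ m) (hd : 1 ≤ d) (hdm : d < m) :
    (d : ℝ) ≤ (m + 2) * Real.logb m d + m / 2 + 1 := by
  have hm1 : (1 : ℝ) < m := by exact_mod_cast hm
  have hd1 : (1 : ℝ) ≤ d := by exact_mod_cast hd
  have hlog : 0 ≤ Real.logb m d := Real.logb_nonneg hm1 hd1
  rcases le_or_gt (d : ℝ) (m / 2 + 1) with hsmall | hlarge
  · nlinarith
  · have hsq : (m : ℝ) ≤ (d : ℝ) ^ 2 := by nlinarith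
    have hhalf : 1 ≤ 2 * Real.logb m d := by
      have := Real.logb_le_logb_of_le hm1 (by positivity) hsq
      rwa [Real.logb_self_eq_one hm1, Real.logb_pow, Nat.cast_ofNat] at this
    have : (d : ℝ) < m := by exact_mod_cast hdm
    nlinarith

theorem mul_log_add_div_pow_log_le {m : ℕ} (hm : 2 ≤ m) (n : ℕ) :
    (((m + 1) * Nat.log m n + n / m ^ Nat.log m n : ℕ) : ℝ) ≤
      (m + 2) * Real.logb m n + m / 2 + 1 := by
  have hm1 : (1 : ℝ) < m := by exact_mod_cast hm
  rcases Nat.eq_zero_or_pos n with rfl | hn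
  · simp only [Nat.log_zero_right, Nat.zero_div, mul_zero, add_zero, Nat.cast_zero,
      Real.logb_zero]
    positivity
  set J := Nat.log m n
  set d := n / m ^ J
  have hJ : m ^ J ≤ n := Nat.pow_log_le_self m hn.ne'
  have hd : 1 ≤ d := Nat.div_pos hJ (by positivity)
  have hdm : d < m :=
    Nat.div_lt_of_lt_mul (by rw [← pow_succ]; exact Nat.lt_pow_succ_log_self (by omega) n)
  have hlog : (J : ℝ) + Real.logb m d ≤ Real.logb m n := by
    have hle : (d : ℝ) * (m : ℝ) ^ J ≤ n := by exact_mod_cast Nat.div_mul_le_self n (m ^ J)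
    have := Real.logb_le_logb_of_le hm1 (by positivity) hle
    rwa [Real.logb_mul (by positivity) (by positivity), Real.logb_pow, Real.logb_self_eq_one hm1,
      mul_one, add_comm] at this
  have := natCast_le_mul_logb_of_lt hm hd hdm
  push_cast
  nlinarith [(Nat.cast_nonneg J : (0 : ℝ) ≤ J)]

namespace BS

variable {m : ℕ}

theorem bBS_mul_aBS_mul_inv : bBS m * aBS m * (bBS m)⁻¹ = aBS m ^ m := by
  have := PresentedGroup.one_of_mem (rels := BSrel m) rfl
  simp only [map_mul, map_inv, map_pow] at this
  exact mul_inv_eq_one.mp this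

theorem bBS_mul_aBS_pow_mul_inv (n : ℕ) : bBS m * aBS m ^ n * (bBS m)⁻¹ = aBS m ^ (m * n) := by
  rw [← conj_pow, bBS_mul_aBS_mul_inv, pow_mul]

theorem closure_genBS : Subgroup.closure (genBS m) = ⊤ := by
  have : genBS m = Set.range PresentedGroup.of := by
    ext; simp [genBS, aBS, bBS, Fin.exists_fin_two, eq_comm]
  rw [this, PresentedGroup.closure_range_of]

theorem aBS_mem_genBS : aBS m ∈ genBS m := Or.inl rfl

theorem bBS_mem_genBS : bBS m ∈ genBS m := Or.inr rfl

noncomputable def toPerm (m : ℕ) (hm : (m : ℝ) ≠ 0) : BS m →* Equiv.Perm ℝ :=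
  PresentedGroup.toGroup (f := ![Equiv.addRight 1, Equiv.mulLeft₀ (m : ℝ) hm]) <| by
    rintro _ rfl
    ext x
    simp only [map_mul, map_inv, map_pow, FreeGroup.lift_apply_of, Matrix.cons_val_zero,
      Matrix.cons_val_one, Matrix.cons_val_fin_one, Equiv.nsmul_addRight, nsmul_eq_mul, mul_one,
      Equiv.neg_addRight, Equiv.Perm.mul_apply, Equiv.coe_addRight, Equiv.Perm.coe_inv,
      Equiv.mulLeft₀_symm_apply, Equiv.mulLeft₀_apply, Equiv.Perm.coe_one, id_eq]
    field_simp
    ring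

theorem toPerm_aBS (hm : (m : ℝ) ≠ 0) : toPerm m hm (aBS m) = Equiv.addRight 1 :=
  PresentedGroup.toGroup.of _

theorem toPerm_bBS (hm : (m : ℝ) ≠ 0) : toPerm m hm (bBS m) = Equiv.mulLeft₀ (m : ℝ) hm :=
  PresentedGroup.toGroup.of _

theorem wordLength_aBS_pow_le (hm : 2 ≤ m) (n : ℕ) :
    wordLength (genBS m) (aBS m ^ n) ≤ (m + 1) * Nat.log m n + n / m ^ Nat.log m n := by
  have ha : wordLength (genBS m) (aBS m) ≤ 1 := wordLength_le_one_of_mem aBS_mem_genBS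
  induction n using Nat.strong_induction_on with
  | _ n ih =>
  rcases lt_or_ge n m with hnm | hmn
  · rw [Nat.log_of_lt hnm, pow_zero, Nat.div_one, mul_zero, zero_add]
    exact (wordLength_pow_le closure_genBS _ n).trans (mul_le_of_le_one_right (Nat.zero_le _) ha)
  · have hsplit : aBS m ^ n = aBS m ^ (n % m) * (bBS m * aBS m ^ (n / m) * (bBS m)⁻¹) := by
      rw [bBS_mul_aBS_pow_mul_inv, ← pow_add, Nat.mod_add_div]
    have hmul := wordLength_mul_le closure_genBS (aBS m ^ (n % m))
      (bBS m * aBS m ^ (n / m) * (bBS m)⁻¹)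
    have hconj := wordLength_conj_le closure_genBS bBS_mem_genBS (aBS m ^ (n / m))
    have hdigit := (wordLength_pow_le closure_genBS (aBS m) (n % m)).trans
      (mul_le_of_le_one_right (Nat.zero_le _) ha)
    have hq := ih (n / m) (Nat.div_lt_self (by omega) (by omega))
    have hmod := Nat.mod_lt n (show m > 0 by omega)
    rw [hsplit, Nat.log_of_one_lt_of_le (by omega) hmn, pow_succ', ← Nat.div_div_eq_div_mul,
      mul_add]
    omega

theorem logb_abs_le_wordLength_aBS_zpow (hm : 2 ≤ m) (r : ℤ) :
    Real.logb m |(r : ℝ)| ≤ wordLength (genBS m) (aBS m ^ r) := by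
  have hmR : (2 : ℝ) ≤ m := by exact_mod_cast hm
  have hm0 : (m : ℝ) ≠ 0 := by positivity
  let _ : MulAction (BS m) ℝ := MulAction.compHom ℝ (toPerm m hm0)
  have hgen : ∀ s ∈ genBS m, ∀ x : ℝ,
      |s • x| + 1 ≤ m * (|x| + 1) ∧ |s⁻¹ • x| + 1 ≤ m * (|x| + 1) := by
    rintro s (rfl | rfl) x
    · change |toPerm m hm0 (aBS m) x| + 1 ≤ _ ∧ |toPerm m hm0 (aBS m)⁻¹ x| + 1 ≤ _
      have h₁ := abs_add_le x 1
      have h₂ := abs_add_le x (-1)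
      simp only [map_inv, toPerm_aBS, Equiv.neg_addRight, Equiv.coe_addRight, abs_one, abs_neg]
        at h₁ h₂ ⊢
      constructor <;> nlinarith [abs_nonneg x]
    · change |toPerm m hm0 (bBS m) x| + 1 ≤ _ ∧ |toPerm m hm0 (bBS m)⁻¹ x| + 1 ≤ _
      have hinv : (m : ℝ)⁻¹ ≤ 1 := inv_le_one_of_one_le₀ (by linarith)
      simp only [toPerm_bBS, map_inv, Equiv.Perm.coe_inv, Equiv.mulLeft₀_apply,
        Equiv.mulLeft₀_symm_apply, abs_mul, abs_inv, Nat.abs_cast]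
      constructor <;> nlinarith [abs_nonneg x]
  have hgrowth := apply_smul_le_pow_wordLength_mul (N := fun x : ℝ => |x| + 1) closure_genBS
    (by positivity) hgen (aBS m ^ r) (0 : ℝ)
  change |toPerm m hm0 (aBS m ^ r) 0| + 1 ≤ _ at hgrowth
  simp only [map_zpow, toPerm_aBS, Equiv.zsmul_addRight, zsmul_eq_mul, mul_one,
    Equiv.coe_addRight, zero_add, abs_zero] at hgrowth
  exact Real.logb_le_of_le_pow (by linarith) (abs_nonneg _) (by linarith)

theorem wordLength_aBS_zpow_le (hm : 2 ≤ m) (r : ℤ) :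
    (wordLength (genBS m) (aBS m ^ r) : ℝ) ≤ (m + 2) * Real.logb m |(r : ℝ)| + m / 2 + 1 := by
  have hnat (n : ℕ) :
      (wordLength (genBS m) (aBS m ^ n) : ℝ) ≤ (m + 2) * Real.logb m n + m / 2 + 1 :=
    (Nat.cast_le.mpr (wordLength_aBS_pow_le hm n)).trans (mul_log_add_div_pow_log_le hm n)
  obtain ⟨n, rfl | rfl⟩ := Int.eq_nat_or_neg r
  · simpa using hnat n
  · rw [zpow_neg, zpow_natCast]
    refine (Nat.cast_le.mpr (wordLength_inv_le closure_genBS _)).trans ?_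
    simpa using hnat n

end BS

theorem stmt4_general (m : ℕ) (hm : 2 ≤ m) (r : ℤ) :
    (1 / 2 : ℝ) * Real.logb m |(r : ℝ)| ≤ (wordLength (genBS m) (aBS m ^ r) : ℝ) ∧
    (wordLength (genBS m) (aBS m ^ r) : ℝ) ≤
      ((m : ℝ) + 2) * Real.logb m |(r : ℝ)| + (m : ℝ) / 2 + 1 := by
  have hlower := BS.logb_abs_le_wordLength_aBS_zpow hm r
  have hlen : (0 : ℝ) ≤ wordLength (genBS m) (aBS m ^ r) := Nat.cast_nonneg _
  exact ⟨by linarith, BS.wordLength_aBS_zpow_le hm r⟩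

/-- In `BS(1,m)` with `m ≥ 2`, for every nonzero integer `r`,
`(1/2)·log_m |r| ≤ |aʳ| ≤ (m+2)·log_m |r| + m/2 + 1`. -/
theorem stmt4 (m : ℕ) (hm : 2 ≤ m) (r : ℤ) (hr : r ≠ 0) :
    (1 / 2 : ℝ) * Real.logb m |(r : ℝ)| ≤ (wordLength (genBS m) (aBS m ^ r) : ℝ) ∧
    (wordLength (genBS m) (aBS m ^ r) : ℝ) ≤
      ((m : ℝ) + 2) * Real.logb m |(r : ℝ)| + (m : ℝ) / 2 + 1 :=
  stmt4_general m hm r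
end

section
/- Let M be a diagonalisable integer matrix with all eigenvalues of absolute value > 1 and i a nonzero integer. If u = t⁻ᵖu_a tᵖ, v = t⁻ᑫv_a tᑫ, x = t⁻ʸx_a tʸ lie in A ≤ Γ_M (with p, q, y the minimal non-negative exponents) and satisfy the twisted relation u·φ_M^i(x) = x·v, then in coordinate vectors 𝐱 = (Mⁱ − I)⁻¹ (M^{y−q}𝐯 − M^{y−p}𝐮); moreover y ≤ p + i and y ≤ q cannot both fail, i.e. we cannot have simultaneously y > q and y > p + i. -/
open scoped BigOperators

/-- The relators of the abelian-by-cyclic group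
`Γ_M = ⟨t, a₁, …, a_d ∣ [aᵢ,aⱼ] = 1, t aᵢ t⁻¹ = φ_M(aᵢ)⟩`, where the generator `t`
is indexed by `none` and the generators `aᵢ` by `some i`. -/
def GammaRels (d : ℕ) (M : Matrix (Fin d) (Fin d) ℤ) : Set (FreeGroup (Option (Fin d))) :=
  (⋃ (i : Fin d) (j : Fin d),
    {FreeGroup.of (some i) * FreeGroup.of (some j) *
      (FreeGroup.of (some i))⁻¹ * (FreeGroup.of (some j))⁻¹}) ∪
  (⋃ i : Fin d,
    {FreeGroup.of none * FreeGroup.of (some i) * (FreeGroup.of none)⁻¹ *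
      (((List.finRange d).map (fun j => FreeGroup.of (some j) ^ (M j i))).prod)⁻¹})

/-- The abelian-by-cyclic group `Γ_M`. -/
abbrev GammaM (d : ℕ) (M : Matrix (Fin d) (Fin d) ℤ) := PresentedGroup (GammaRels d M)

/-- The stable letter `t` of `Γ_M`. -/
def tG (d : ℕ) (M : Matrix (Fin d) (Fin d) ℤ) : GammaM d M := PresentedGroup.of none

/-- The generator `aᵢ` of `Γ_M`. -/
def aG (d : ℕ) (M : Matrix (Fin d) (Fin d) ℤ) (i : Fin d) : GammaM d M :=
  PresentedGroup.of (some i)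

/-- The element of `A₀ = ⟨a₁,…,a_d⟩ ≅ ℤᵈ` with exponent vector `x`. -/
def AG (d : ℕ) (M : Matrix (Fin d) (Fin d) ℤ) (x : Fin d → ℤ) : GammaM d M :=
  ((List.finRange d).map (fun i => aG d M i ^ (x i))).prod

/-!
Since no eigenvalue of `M` vanishes, `M` is invertible over `ℚ`, and `t ↦ (0, 1)`,
`aⱼ ↦ (eⱼ, 0)` defines a homomorphism `Γ_M → ℚᵈ ⋊_M ℤ` sending `t⁻ᵐ A(𝐜) tᵐ` to `M⁻ᵐ 𝐜`.
Under it the twisted relation becomes `M^{y-p} 𝐮 + Mⁱ 𝐱 = 𝐱 + M^{y-q} 𝐯`, and `Mⁱ - I` is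
invertible since, by the spectral mapping theorem, its eigenvalues `λⁱ - 1` cannot vanish when
`|λ| > 1`. If `y > q` and `y > p + i`, the same relation (multiplied by `M⁻ⁱ` when `i < 0`)
writes `𝐱` as `M` applied to an integer vector, contradicting the minimality of `y`.
-/

open Matrix Multiplicative SemidirectProduct

namespace spectrum

variable {𝕜 A : Type*} [NormedField 𝕜] [Ring A] [Algebra 𝕜 A]

theorem isUnit_of_forall_one_lt_norm {a : A} (ha : ∀ μ ∈ spectrum 𝕜 a, 1 < ‖μ‖) :
    IsUnit a :=
  (zero_notMem_iff 𝕜).mp fun h0 => absurd (ha 0 h0) (by simp)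

theorem isUnit_pow_sub_one_of_forall_one_lt_norm [IsAlgClosed 𝕜] {a : A}
    (ha : ∀ μ ∈ spectrum 𝕜 a, 1 < ‖μ‖) {n : ℕ} (hn : n ≠ 0) : IsUnit (a ^ n - 1) := by
  have hone : (1 : 𝕜) ∉ spectrum 𝕜 (a ^ n) := by
    rw [map_pow_of_pos a (Nat.pos_of_ne_zero hn)]
    rintro ⟨μ, hμ, hμn⟩
    have := congrArg norm hμn
    rw [norm_pow, norm_one] at this
    exact (one_lt_pow₀ (ha μ hμ) hn).ne' this
  rw [← neg_sub, IsUnit.neg_iff]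
  simpa using notMem_iff.mp hone

end spectrum

namespace Matrix

variable {n : Type*} [Fintype n] [DecidableEq n]

theorem isUnit_of_isUnit_map {K L : Type*} [Field K] [CommRing L] [Nontrivial L] (f : K →+* L)
    {B : Matrix n n K} (h : IsUnit (B.map f)) : IsUnit B := by
  rw [isUnit_iff_isUnit_det] at h ⊢
  rw [← RingHom.mapMatrix_apply, ← RingHom.map_det] at h
  exact isUnit_iff_ne_zero.mpr fun h0 => by simp [h0] at h

theorem isUnit_zpow_sub_one {R : Type*} [CommRing R] {A : Matrix n n R} (hA : IsUnit A)
    (h : ∀ k : ℕ, k ≠ 0 → IsUnit (A ^ k - 1)) {i : ℤ} (hi : i ≠ 0) : IsUnit (A ^ i - 1) := by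
  obtain ⟨k, rfl | rfl⟩ := Int.eq_nat_or_neg i
  · rw [zpow_natCast]
    exact h k (by simpa using hi)
  · have hdet : IsUnit A.det := (isUnit_iff_isUnit_det A).mp hA
    have hinv : IsUnit (A ^ (-(k : ℤ))) := (isUnit_iff_isUnit_det _).mpr (hdet.det_zpow _)
    have hfac : A ^ (-(k : ℤ)) - 1 = -(A ^ (-(k : ℤ)) * (A ^ k - 1)) := by
      rw [mul_sub, mul_one, ← zpow_natCast, zpow_neg_mul_zpow_self _ hdet]
      abel
    rw [hfac, IsUnit.neg_iff]
    exact hinv.mul (h k (by simpa using hi))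

theorem isUnit_of_forall_one_lt_norm {K 𝕜 : Type*} [Field K] [NormedField 𝕜] (f : K →+* 𝕜)
    {A : Matrix n n K} (hA : ∀ μ, (A.map f).charpoly.IsRoot μ → 1 < ‖μ‖) : IsUnit A :=
  isUnit_of_isUnit_map f <| spectrum.isUnit_of_forall_one_lt_norm fun μ hμ =>
    hA μ (mem_spectrum_iff_isRoot_charpoly.mp hμ)

theorem isUnit_zpow_sub_one_of_forall_one_lt_norm {K 𝕜 : Type*} [Field K] [NormedField 𝕜]
    [IsAlgClosed 𝕜] (f : K →+* 𝕜) {A : Matrix n n K}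
    (hA : ∀ μ, (A.map f).charpoly.IsRoot μ → 1 < ‖μ‖) {i : ℤ} (hi : i ≠ 0) :
    IsUnit (A ^ i - 1) := by
  have hspec : ∀ μ ∈ spectrum 𝕜 (A.map f), 1 < ‖μ‖ := fun μ hμ =>
    hA μ (mem_spectrum_iff_isRoot_charpoly.mp hμ)
  refine isUnit_zpow_sub_one (isUnit_of_forall_one_lt_norm f hA) (fun k hk => ?_) hi
  refine isUnit_of_isUnit_map f ?_
  rw [← RingHom.mapMatrix_apply, map_sub, map_pow, map_one]
  exact spectrum.isUnit_pow_sub_one_of_forall_one_lt_norm hspec hk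

theorem intCast_pow_mulVec {R : Type*} [CommRing R] (M : Matrix n n ℤ) (m : ℕ) (z : n → ℤ) :
    (fun k => ((M ^ m *ᵥ z) k : R)) = M.map (↑) ^ m *ᵥ fun k => (z k : R) := by
  have hpow : (M ^ m).map (Int.castRingHom R) = M.map (↑) ^ m :=
    map_pow (Int.castRingHom R).mapMatrix M m
  ext k
  rw [← hpow]
  exact RingHom.map_mulVec (Int.castRingHom R) (M ^ m) z k

theorem exists_eq_mulVec_of_intCast_eq {R : Type*} [CommRing R] [CharZero R] (M : Matrix n n ℤ)
    {x s r : n → ℤ} {a b c : ℤ} (ha : 0 < a) (hb : 0 < b) (hc : 0 < c)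
    (h : (fun k => (x k : R)) = M.map (↑) ^ a *ᵥ (fun k => (x k : R)) +
      M.map (↑) ^ b *ᵥ (fun k => (s k : R)) - M.map (↑) ^ c *ᵥ (fun k => (r k : R))) :
    ∃ w, x = M *ᵥ w := by
  lift a to ℕ using ha.le
  lift b to ℕ using hb.le
  lift c to ℕ using hc.le
  simp only [zpow_natCast] at h
  have hx : x = M ^ a *ᵥ x + M ^ b *ᵥ s - M ^ c *ᵥ r := by
    refine funext fun k => Int.cast_injective (α := R) ?_
    simp only [Pi.add_apply, Pi.sub_apply, Int.cast_add, Int.cast_sub,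
      congrFun (intCast_pow_mulVec M _ _) k]
    exact congrFun h k
  refine ⟨M ^ (a - 1) *ᵥ x + M ^ (b - 1) *ᵥ s - M ^ (c - 1) *ᵥ r, ?_⟩
  rwa [mulVec_sub, mulVec_add, mulVec_mulVec, mulVec_mulVec, mulVec_mulVec,
    mul_pow_sub_one (by omega), mul_pow_sub_one (by omega), mul_pow_sub_one (by omega)]

end Matrix

namespace GammaM

variable {d : ℕ} {R : Type*} [CommRing R]

def mulVecAut : GL (Fin d) R →* MulAut (Multiplicative (Fin d → R)) where
  toFun U := AddEquiv.toMultiplicative (DistribMulAction.toAddAut (GL (Fin d) R) (Fin d → R) U)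
  map_one' := by ext; simp
  map_mul' U V := by ext; simp [mul_smul]

abbrev VecSemidirect (U : GL (Fin d) R) :=
  Multiplicative (Fin d → R) ⋊[mulVecAut.comp (zpowersHom _ U)] Multiplicative ℤ

theorem inr_mul_inl_mul_inr_inv (U : GL (Fin d) R) (z : ℤ) (w : Fin d → R) :
    (inr (ofAdd z) * inl (ofAdd w) * (inr (ofAdd z))⁻¹ : VecSemidirect U) =
      inl (ofAdd ((U : Matrix (Fin d) (Fin d) R) ^ z *ᵥ w)) := by
  rw [← map_inv, ← inl_aut, ← coe_units_zpow]
  rfl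

theorem prod_inl_single_zpow (U : GL (Fin d) R) (c : Fin d → ℤ) :
    ((List.finRange d).map
        (fun j => (inl (ofAdd (Pi.single j 1)) : VecSemidirect U) ^ c j)).prod =
      inl (ofAdd fun k => (c k : R)) := by
  have h : ((List.finRange d).map fun j => (ofAdd (Pi.single j 1) : Multiplicative _) ^ c j).prod =
      ofAdd fun k => (c k : R) := by
    simp_rw [← Fin.prod_univ_def, ← ofAdd_zsmul, ← ofAdd_sum]
    congr 1
    ext k
    simp [Finset.sum_apply, Pi.single_apply]
  simp_rw [← map_zpow, ← h, map_list_prod, List.map_map]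
  rfl

variable (M : Matrix (Fin d) (Fin d) ℤ) (U : GL (Fin d) R)

def generatorImage : Option (Fin d) → VecSemidirect U
  | none => inr (ofAdd 1)
  | some j => inl (ofAdd (Pi.single j 1))

theorem lift_generatorImage_eq_one (hU : (U : Matrix (Fin d) (Fin d) R) = M.map (↑)) :
    ∀ r ∈ GammaRels d M, FreeGroup.lift (generatorImage U) r = 1 := by
  intro r hr
  simp only [GammaRels, Set.mem_union, Set.mem_iUnion, Set.mem_singleton_iff] at hr
  rcases hr with ⟨a, b, rfl⟩ | ⟨a, rfl⟩
  · simp only [map_mul, map_inv, FreeGroup.lift_apply_of, generatorImage]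
    rw [((Commute.all _ _).map inl).eq, mul_inv_cancel_right, mul_inv_cancel]
  · have hcol :
        (U : Matrix (Fin d) (Fin d) R) ^ (1 : ℤ) *ᵥ Pi.single a 1 = fun k => (M k a : R) := by
      rw [zpow_one, mulVec_single_one, hU]
      rfl
    simp only [map_mul, map_inv, map_list_prod, List.map_map, Function.comp_def, map_zpow,
      FreeGroup.lift_apply_of, generatorImage, prod_inl_single_zpow, inr_mul_inl_mul_inr_inv, hcol,
      mul_inv_cancel]

variable {M U}

def toVecSemidirect (hU : (U : Matrix (Fin d) (Fin d) R) = M.map (↑)) :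
    GammaM d M →* VecSemidirect U :=
  PresentedGroup.toGroup (lift_generatorImage_eq_one M U hU)

section

variable (hU : (U : Matrix (Fin d) (Fin d) R) = M.map (↑))

theorem toVecSemidirect_tG_zpow (z : ℤ) : toVecSemidirect hU (tG d M ^ z) = inr (ofAdd z) := by
  rw [map_zpow, tG, toVecSemidirect, PresentedGroup.toGroup.of, generatorImage, ← map_zpow,
    ← ofAdd_zsmul, smul_eq_mul, mul_one]

theorem toVecSemidirect_AG (c : Fin d → ℤ) :
    toVecSemidirect hU (AG d M c) = inl (ofAdd fun k => (c k : R)) := by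
  rw [AG, map_list_prod, List.map_map, ← prod_inl_single_zpow U c]
  congr 1
  refine List.map_congr_left fun j _ => ?_
  rw [Function.comp_apply, map_zpow, aG, toVecSemidirect, PresentedGroup.toGroup.of]
  rfl

theorem toVecSemidirect_tG_zpow_conj {g : GammaM d M} {w : Fin d → R}
    (hg : toVecSemidirect hU g = inl (ofAdd w)) (z : ℤ) :
    toVecSemidirect hU (tG d M ^ z * g * (tG d M ^ z)⁻¹) =
      inl (ofAdd ((U : Matrix (Fin d) (Fin d) R) ^ z *ᵥ w)) := by
  rw [map_mul, map_mul, map_inv, hg, toVecSemidirect_tG_zpow, inr_mul_inl_mul_inr_inv]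

theorem toVecSemidirect_tG_pow_conj {g : GammaM d M} {w : Fin d → R}
    (hg : toVecSemidirect hU g = inl (ofAdd w)) (m : ℕ) :
    toVecSemidirect hU ((tG d M ^ m)⁻¹ * g * tG d M ^ m) =
      inl (ofAdd ((U : Matrix (Fin d) (Fin d) R) ^ (-(m : ℤ)) *ᵥ w)) := by
  rw [← toVecSemidirect_tG_zpow_conj hU hg, _root_.zpow_neg, inv_inv, zpow_natCast]

end

theorem zpow_mulVec_of_twisted (hU : (U : Matrix (Fin d) (Fin d) R) = M.map (↑))
    {i : ℤ} {p q y : ℕ} {u v x : Fin d → ℤ}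
    (htw : ((tG d M ^ p)⁻¹ * AG d M u * tG d M ^ p) *
        (tG d M ^ i * ((tG d M ^ y)⁻¹ * AG d M x * tG d M ^ y) * (tG d M ^ i)⁻¹) =
      ((tG d M ^ y)⁻¹ * AG d M x * tG d M ^ y) *
        ((tG d M ^ q)⁻¹ * AG d M v * tG d M ^ q)) (k : ℤ) :
    (U : Matrix (Fin d) (Fin d) R) ^ (k + y - p) *ᵥ (fun j => (u j : R)) +
        (U : Matrix (Fin d) (Fin d) R) ^ (k + i) *ᵥ (fun j => (x j : R)) =
      (U : Matrix (Fin d) (Fin d) R) ^ k *ᵥ (fun j => (x j : R)) +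
        (U : Matrix (Fin d) (Fin d) R) ^ (k + y - q) *ᵥ (fun j => (v j : R)) := by
  have hconj := fun m c => toVecSemidirect_tG_pow_conj hU (toVecSemidirect_AG hU c) m
  have h := congrArg (toVecSemidirect hU) htw
  rw [map_mul _ ((tG d M ^ p)⁻¹ * AG d M u * tG d M ^ p),
    map_mul _ ((tG d M ^ y)⁻¹ * AG d M x * tG d M ^ y),
    toVecSemidirect_tG_zpow_conj hU (hconj y x), hconj, hconj, hconj,
    ← map_mul (inl : _ →* VecSemidirect U), ← map_mul (inl : _ →* VecSemidirect U),
    inl_injective.eq_iff, ← ofAdd_add, ← ofAdd_add, ofAdd.injective.eq_iff] at h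
  set A := (U : Matrix (Fin d) (Fin d) R)
  have hA : IsUnit A.det := (isUnit_iff_isUnit_det A).mp U.isUnit
  have h' := congrArg (A ^ (k + y) *ᵥ ·) h
  simp only [mulVec_add, mulVec_mulVec, ← zpow_add hA] at h'
  simpa only [← sub_eq_add_neg, add_sub_cancel_right, add_add_sub_cancel] using h'

end GammaM

theorem stmt14_general (d : ℕ) (M : Matrix (Fin d) (Fin d) ℤ)
    (heig : ∀ μ : ℂ, (M.map ((↑) : ℤ → ℂ)).charpoly.IsRoot μ → 1 < ‖μ‖)
    (i : ℤ) (hi : i ≠ 0)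
    (p q y : ℕ) (u v x : Fin d → ℤ)
    (hymin : 0 < y → ∀ w : Fin d → ℤ, x ≠ M.mulVec w)
    (htw : ((tG d M ^ p)⁻¹ * AG d M u * tG d M ^ p) *
        (tG d M ^ i * ((tG d M ^ y)⁻¹ * AG d M x * tG d M ^ y) * (tG d M ^ i)⁻¹) =
      ((tG d M ^ y)⁻¹ * AG d M x * tG d M ^ y) *
        ((tG d M ^ q)⁻¹ * AG d M v * tG d M ^ q)) :
    (fun j => ((x j : ℚ))) =
      (((M.map ((↑) : ℤ → ℚ)) ^ i - 1)⁻¹).mulVec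
        (((M.map ((↑) : ℤ → ℚ)) ^ ((y : ℤ) - (q : ℤ))).mulVec (fun j => ((v j : ℚ))) -
         ((M.map ((↑) : ℤ → ℚ)) ^ ((y : ℤ) - (p : ℤ))).mulVec (fun j => ((u j : ℚ)))) ∧
    ¬((q : ℤ) < (y : ℤ) ∧ (p : ℤ) + i < (y : ℤ)) := by
  set A := M.map ((↑) : ℤ → ℚ)
  have hroots : ∀ μ : ℂ, (A.map (Rat.castHom ℂ)).charpoly.IsRoot μ → 1 < ‖μ‖ := by
    simpa [A, Matrix.map_map, Function.comp_def] using heig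
  obtain ⟨U, hU⟩ := isUnit_of_forall_one_lt_norm (Rat.castHom ℂ) hroots
  have key := GammaM.zpow_mulVec_of_twisted hU htw
  rw [hU] at key
  have h0 := key 0
  simp only [zero_add, zpow_zero, one_mulVec] at h0
  constructor
  · have hB := isUnit_zpow_sub_one_of_forall_one_lt_norm (Rat.castHom ℂ) hroots hi
    have hBx : (A ^ i - 1) *ᵥ (fun j => (x j : ℚ)) =
        A ^ ((y : ℤ) - q) *ᵥ (fun j => (v j : ℚ)) - A ^ ((y : ℤ) - p) *ᵥ (fun j => (u j : ℚ)) := by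
      rw [sub_mulVec, one_mulVec]
      linear_combination h0
    have := hB.invertible
    exact (inv_mulVec_eq_vec hBx.symm).symm
  · rintro ⟨hqy, hpy⟩
    suffices ∃ w, x = M *ᵥ w by
      obtain ⟨w, hw⟩ := this
      exact hymin (by omega) w hw
    rcases hi.lt_or_gt with hneg | hpos
    · have h := key (-i)
      rw [neg_add_cancel, zpow_zero, one_mulVec] at h
      exact exists_eq_mulVec_of_intCast_eq M (a := -i) (b := -i + y - q) (c := -i + y - p)
        (by omega) (by omega) (by omega) (by linear_combination h)
    · exact exists_eq_mulVec_of_intCast_eq M (a := i) (b := y - p) (c := y - q)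
        (by omega) (by omega) (by omega) (by linear_combination -h0)

/-- Twisted conjugacy in `A ≤ Γ_M`: if `u = t⁻ᵖ A(𝐮) tᵖ`, `v = t⁻ᑫ A(𝐯) tᑫ`,
`x = t⁻ʸ A(𝐱) tʸ` (with `p, q, y` minimal) satisfy `u · φ_M^i(x) = x · v` with
`i ≠ 0`, then `𝐱 = (Mⁱ − I)⁻¹ (M^{y−q}𝐯 − M^{y−p}𝐮)` (over `ℚ`), and we cannot
have both `y > q` and `y > p + i`. -/
theorem stmt14 (d : ℕ) (M : Matrix (Fin d) (Fin d) ℤ)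
    (hdiag : ∃ P D : Matrix (Fin d) (Fin d) ℝ, IsUnit P ∧ D.IsDiag ∧
      M.map ((↑) : ℤ → ℝ) = P * D * P⁻¹)
    (heig : ∀ μ : ℂ, (M.map ((↑) : ℤ → ℂ)).charpoly.IsRoot μ → 1 < ‖μ‖)
    (i : ℤ) (hi : i ≠ 0)
    (p q y : ℕ) (u v x : Fin d → ℤ)
    (hpmin : 0 < p → ∀ w : Fin d → ℤ, u ≠ M.mulVec w)
    (hqmin : 0 < q → ∀ w : Fin d → ℤ, v ≠ M.mulVec w)
    (hymin : 0 < y → ∀ w : Fin d → ℤ, x ≠ M.mulVec w)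
    (htw : ((tG d M ^ p)⁻¹ * AG d M u * tG d M ^ p) *
        (tG d M ^ i * ((tG d M ^ y)⁻¹ * AG d M x * tG d M ^ y) * (tG d M ^ i)⁻¹) =
      ((tG d M ^ y)⁻¹ * AG d M x * tG d M ^ y) *
        ((tG d M ^ q)⁻¹ * AG d M v * tG d M ^ q)) :
    (fun j => ((x j : ℚ))) =
      (((M.map ((↑) : ℤ → ℚ)) ^ i - 1)⁻¹).mulVec
        (((M.map ((↑) : ℤ → ℚ)) ^ ((y : ℤ) - (q : ℤ))).mulVec (fun j => ((v j : ℚ))) -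
         ((M.map ((↑) : ℤ → ℚ)) ^ ((y : ℤ) - (p : ℤ))).mulVec (fun j => ((u j : ℚ)))) ∧
    ¬((q : ℤ) < (y : ℤ) ∧ (p : ℤ) + i < (y : ℤ)) :=
  stmt14_general d M heig i hi p q y u v x hymin htw
end
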